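/- Let Φ be a real number with Φ² = Φ + 1 and let w = (w₁, …, wₙ) be a nonempty word of integers. Then the (1,1) entry (row 1, column 1) of M(Φ, w) equals A·Φ + B, where A = Σ_{s ≪₁ w} χ(n − |s|) · F_{|s|} · m_s and B = Σ_{s ≪₁ w} χ(n − |s|) · F_{|s|−1} · m_s, the sums ranging over all subwords s of w with s ≪₁ w. -/

import Mathlib

open Matrix

noncomputable section

/-- The matrix `S = !![0, -1; 1, 0]` over `ℝ`. -/
def S : Matrix (Fin 2) (Fin 2) ℝ := !![0, -1; 1, 0]

/-- The matrix `T(λ) = !![1, λ; 0, 1]` over `ℝ`. -/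
def T (lam : ℝ) : Matrix (Fin 2) (Fin 2) ℝ := !![1, lam; 0, 1]

/-- For a nonempty word `w = (w₁, …, wₙ)` of integers,
`M lam w = T(λ)^{w₁} · S · T(λ)^{w₂} · S · ⋯ · S · T(λ)^{wₙ}`. -/
def M (lam : ℝ) : List ℤ → Matrix (Fin 2) (Fin 2) ℝ
  | [] => 1
  | a :: t => T lam ^ a * (t.map fun b => S * T lam ^ b).prod

/-- The 4-periodic function with `χ(0) = 0, χ(1) = 1, χ(2) = 0, χ(3) = -1`
(the nontrivial Dirichlet character mod 4, extended to all integers). -/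
def chi (m : ℤ) : ℤ := if m % 4 = 1 then 1 else if m % 4 = 3 then -1 else 0

/-- The Fibonacci numbers, extended so that `F₋₁ = 1` (the only negative index used). -/
def fibz (m : ℤ) : ℤ := if m < 0 then 1 else (Nat.fib m.toNat : ℤ)

/-- A subword of `(w₁, …, wₙ)` is encoded by its set `J` of (0-based) positions;
the 1-based indices `j₁ < ⋯ < j_m` are the sorted elements of `J` plus one.
`ll1 J` says `jᵢ ≡ i (mod 2)` for all `i`, i.e. `s ≪₁ w`; the 0-based version is
that the `i`-th smallest element of `J` is congruent to `i` mod 2 (0-based). -/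
def ll1 {n : ℕ} (J : Finset (Fin n)) : Prop :=
  ∀ i : ℕ, ∀ hi : i < (J.sort (· ≤ ·)).length,
    ((J.sort (· ≤ ·)).get ⟨i, hi⟩).val % 2 = i % 2

instance {n : ℕ} : DecidablePred (ll1 (n := n)) := fun _ =>
  Nat.decidableBallLT _ _

/-!
Since `T(λ)^a · S = !![aλ, -1; 1, 0]`, the first column of `M(λ, a :: t)` is that matrix times
the first column of `M(λ, t)`, so the corner entry `c(w)` of `M(λ, w)` obeys the continuant
recursion `c(a :: b :: t) = aλ · c(b :: t) - c(t)`. Splitting subwords according to whether they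
use the first letter shows that `Σ_{s ≪₁ w} χ(n - |s|) λ^|s| m_s` obeys the same recursion:
dropping the first letter turns `≪₁` into `≪₃` and `≪₃` into `≪₁`, and two such shifts cost the
sign `χ(m + 2) = -χ(m)`. Finally `Φ^k = F_k Φ + F_{k-1}` splits `Φ^|s|` into the two sums.
-/

open Finset

lemma chi_add_two (m : ℤ) : chi (m + 2) = -chi m := by
  unfold chi; split_ifs <;> omega

lemma sum_finset_fin_succ {M : Type*} [AddCommMonoid M] {n : ℕ} (f : Finset (Fin (n + 1)) → M) :
    ∑ K, f K = ∑ J : Finset (Fin n), f (J.map (Fin.succEmb n)) +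
      ∑ J : Finset (Fin n), f (insert 0 (J.map (Fin.succEmb n))) := by
  have huniv : (univ : Finset (Fin (n + 1))) = insert 0 (univ.map (Fin.succEmb n)) := by
    rw [Fin.univ_succ, cons_eq_insert]; rfl
  have hinj : Set.InjOn (image (Fin.succEmb n)) (univ : Finset (Fin n)).powerset :=
    (image_injective (Fin.succEmb n).injective).injOn
  rw [← powerset_univ, huniv, sum_powerset_insert (by simp), map_eq_image,
    powerset_image, sum_image hinj, sum_image hinj, powerset_univ]
  simp only [map_eq_image]

lemma sort_map_succEmb {n : ℕ} (J : Finset (Fin n)) :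
    (J.map (Fin.succEmb n)).sort = J.sort.map Fin.succ :=
  ((Fin.strictMono_succ).strictMonoOn _).map_finsetSort.symm

lemma sort_insert_zero_map_succEmb {n : ℕ} (J : Finset (Fin n)) :
    (insert 0 (J.map (Fin.succEmb n))).sort = 0 :: J.sort.map Fin.succ := by
  rw [sort_insert _ (fun b _ => Fin.zero_le b) (by simp), sort_map_succEmb]

/-- `AltParity 0` is definitionally `ll1` (that is, `≪₁`) and `AltParity 1` is `≪₃`. -/
def AltParity {n : ℕ} (b : ℕ) (J : Finset (Fin n)) : Prop :=
  ∀ i : ℕ, ∀ hi : i < J.sort.length, (J.sort.get ⟨i, hi⟩).val % 2 = (i + b) % 2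

instance {n b : ℕ} : DecidablePred (AltParity (n := n) b) := fun _ =>
  Nat.decidableBallLT _ _

lemma altParity_add_two {n b : ℕ} (J : Finset (Fin n)) :
    AltParity (b + 2) J ↔ AltParity b J := by
  refine forall₂_congr fun i hi => ?_
  omega

lemma altParity_map_succEmb {n b : ℕ} (J : Finset (Fin n)) :
    AltParity b (J.map (Fin.succEmb n)) ↔ AltParity (b + 1) J := by
  simp only [AltParity, sort_map_succEmb, List.length_map, List.get_eq_getElem, List.getElem_map,
    Fin.val_succ]
  refine forall₂_congr fun i hi => ?_
  omega

lemma altParity_insert_zero {n b : ℕ} (J : Finset (Fin n)) :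
    AltParity b (insert 0 (J.map (Fin.succEmb n))) ↔ b % 2 = 0 ∧ AltParity b J := by
  simp only [AltParity, sort_insert_zero_map_succEmb, List.length_cons, List.length_map,
    List.get_eq_getElem]
  rw [Nat.forall_lt_succ_left']
  simp only [List.getElem_cons_zero, List.getElem_cons_succ, List.getElem_map, Fin.val_succ,
    Fin.val_zero]
  exact and_congr (by omega) (forall₂_congr fun i hi => by omega)

lemma altParity_of_fin_zero {b : ℕ} (J : Finset (Fin 0)) : AltParity b J := by
  simp [AltParity, Subsingleton.elim J ∅]

section AltSum

variable {R : Type*} [CommRing R]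

lemma fibz_natCast (k : ℕ) : fibz k = Nat.fib k := by
  simp [fibz]

lemma pow_succ_eq_fib_mul_add_fib {x : R} (hx : x ^ 2 = x + 1) (k : ℕ) :
    x ^ (k + 1) = Nat.fib (k + 1) * x + Nat.fib k := by
  induction k with
  | zero => simp
  | succ k ih =>
    rw [pow_succ, ih, Nat.fib_add_two]
    push_cast
    linear_combination (Nat.fib (k + 1) : R) * hx

lemma pow_eq_fibz_mul_add_fibz {x : R} (hx : x ^ 2 = x + 1) (k : ℕ) :
    x ^ k = fibz k * x + fibz ((k : ℤ) - 1) := by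
  cases k with
  | zero => simp [fibz]
  | succ k =>
    rw [show ((k + 1 : ℕ) : ℤ) - 1 = k by push_cast; ring, fibz_natCast, fibz_natCast,
      Int.cast_natCast, Int.cast_natCast]
    exact pow_succ_eq_fib_mul_add_fib hx k

def altSum (lam : R) (b : ℕ) {n : ℕ} (w : Fin n → ℤ) : R :=
  ∑ J ∈ univ.filter (AltParity b),
    (chi ((n : ℤ) + b - #J) : R) * lam ^ #J * ∏ j ∈ J, (w j : R)

lemma altSum_fin_zero (lam : R) (b : ℕ) (w : Fin 0 → ℤ) : altSum lam b w = chi b := by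
  simp [altSum, altParity_of_fin_zero, Subsingleton.elim _ (∅ : Finset (Fin 0))]

lemma altSum_add_two (lam : R) (b : ℕ) {n : ℕ} (w : Fin n → ℤ) :
    altSum lam (b + 2) w = -altSum lam b w := by
  simp only [altSum, altParity_add_two, ← sum_neg_distrib]
  refine sum_congr rfl fun J _ => ?_
  rw [show (n : ℤ) + (b + 2 : ℕ) - #J = n + b - #J + 2 by push_cast; ring, chi_add_two]
  push_cast; ring

lemma altSum_succ (lam : R) (b : ℕ) {n : ℕ} (w : Fin (n + 1) → ℤ) :
    altSum lam b w = altSum lam (b + 1) (Fin.tail w) +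
      if b % 2 = 0 then lam * w 0 * altSum lam b (Fin.tail w) else 0 := by
  simp only [altSum, sum_filter]
  have h0 (J : Finset (Fin n)) : (0 : Fin (n + 1)) ∉ J.map (Fin.succEmb n) := by simp
  simp only [sum_finset_fin_succ, altParity_map_succEmb, altParity_insert_zero, card_map,
    card_insert_of_notMem (h0 _), prod_map, prod_insert (h0 _), Fin.coe_succEmb, Fin.tail]
  congr 1
  · refine sum_congr rfl fun J _ => ?_
    push_cast
    ring_nf
  · split_ifs with hb
    · simp only [hb, true_and, mul_sum]
      refine sum_congr rfl fun J _ => ?_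
      split_ifs
      · push_cast
        ring_nf
      · rw [mul_zero]
    · simp [hb]

lemma altSum_zero_succ_succ (lam : R) {n : ℕ} (w : Fin (n + 2) → ℤ) :
    altSum lam 0 w =
      lam * w 0 * altSum lam 0 (Fin.tail w) - altSum lam 0 (Fin.tail (Fin.tail w)) := by
  rw [altSum_succ, altSum_succ, altSum_add_two]
  simp only [Nat.reduceAdd, Nat.reduceMod, Nat.one_ne_zero, reduceIte, add_zero]
  ring

end AltSum

lemma T_zpow (lam : ℝ) (a : ℤ) : T lam ^ a = !![1, a * lam; 0, 1] := by
  have hdet : IsUnit (T lam).det := by simp [T, Matrix.det_fin_two]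
  have hinv : (T lam)⁻¹ = !![1, -lam; 0, 1] :=
    Matrix.inv_eq_right_inv (by simp [T, Matrix.one_fin_two])
  induction a using Int.induction_on with
  | zero => simp [Matrix.one_fin_two]
  | succ k ih =>
    rw [Matrix.zpow_add_one hdet, ih, T, Matrix.mul_fin_two]
    push_cast
    ring_nf
  | pred k ih =>
    rw [Matrix.zpow_sub_one hdet, ih, hinv, Matrix.mul_fin_two]
    push_cast
    ring_nf

lemma M_cons_of_ne_nil (lam : ℝ) (a : ℤ) {t : List ℤ} (ht : t ≠ []) :
    M lam (a :: t) = !![a * lam, -1; 1, 0] * M lam t := by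
  obtain ⟨b, t, rfl⟩ := List.exists_cons_of_ne_nil ht
  have hTS : T lam ^ a * S = !![a * lam, -1; 1, 0] := by
    rw [T_zpow, S, Matrix.mul_fin_two]; simp
  simp [M, ← hTS, mul_assoc]

lemma M_ofFn_first_column (lam : ℝ) {n : ℕ} (w : Fin (n + 1) → ℤ) :
    M lam (List.ofFn w) 0 0 = altSum lam 0 w ∧
      M lam (List.ofFn w) 1 0 = altSum lam 0 (Fin.tail w) := by
  induction n with
  | zero =>
    simp [M, T_zpow, altSum_succ, altSum_fin_zero, chi]
  | succ n ih =>
    obtain ⟨h0, h1⟩ := ih (Fin.tail w)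
    have hw : List.ofFn w = w 0 :: List.ofFn (Fin.tail w) := List.ofFn_succ
    rw [hw, M_cons_of_ne_nil _ _ (by simp), altSum_zero_succ_succ]
    simp only [Matrix.mul_apply, Fin.sum_univ_two, h0, h1]
    constructor
    · simp
      ring
    · simp

/-- The (1,1) entry of `M Φ w` equals `A·Φ + B` with
`A = Σ_{s ≪₁ w} χ(n - |s|) F_{|s|} m_s` and `B = Σ_{s ≪₁ w} χ(n - |s|) F_{|s|-1} m_s`. -/
theorem stmt6 (Φ : ℝ) (hΦ : Φ ^ 2 = Φ + 1) (n : ℕ) (hn : 0 < n) (w : Fin n → ℤ) :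
    M Φ (List.ofFn w) 0 0 =
      ((∑ J ∈ Finset.univ.filter (fun J : Finset (Fin n) => ll1 J),
          chi ((n : ℤ) - J.card) * fibz (J.card : ℤ) * ∏ j ∈ J, w j : ℤ) : ℝ) * Φ +
      ((∑ J ∈ Finset.univ.filter (fun J : Finset (Fin n) => ll1 J),
          chi ((n : ℤ) - J.card) * fibz ((J.card : ℤ) - 1) * ∏ j ∈ J, w j : ℤ) : ℝ) := by
  obtain ⟨m, rfl⟩ := Nat.exists_eq_succ_of_ne_zero hn.ne'
  rw [(M_ofFn_first_column Φ w).1, altSum, Nat.cast_zero, add_zero]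
  push_cast
  rw [sum_mul, ← sum_add_distrib]
  refine sum_congr rfl fun J _ => ?_
  rw [pow_eq_fibz_mul_add_fibz hΦ]
  ring
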